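/- There exists a finite Tantrix rotation puzzle configuration (the CROSS subpuzzle) with two designated boundary input edges (left and right) and two designated boundary output edges (left and right), such that for every pair of input colors (c₁, c₂) ∈ {blue, red} × {blue, red}, the configuration with the left input edge constrained to c₁ and the right input edge constrained to c₂ has exactly one solution, and in that solution the left output edge shows color c₂ and the right output edge shows color c₁ (i.e., the two wire values are crossed). -/
import Mathlib


/-! Shared definitions for the Tantrix rotation puzzle formalization. -/

/-- The four Tantrix colors, encoded as `Fin 4`. -/
def red : Fin 4 := 0
def yellow : Fin 4 := 1
def blue : Fin 4 := 2
def green : Fin 4 := 3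

/-- A Tantrix tile assigns a color to each of the six edges of a hexagon such
that exactly three colors occur, each on exactly two edges. -/
def IsTile (t : ZMod 6 → Fin 4) : Prop :=
  (Finset.univ.filter (fun c : Fin 4 => ∃ i, t i = c)).card = 3 ∧
  ∀ c : Fin 4, (∃ i, t i = c) →
    (Finset.univ.filter (fun i : ZMod 6 => t i = c)).card = 2

/-- Rotating a tile by `k ∈ ZMod 6`. -/
def rotTile (t : ZMod 6 → Fin 4) (k : ZMod 6) : ZMod 6 → Fin 4 :=
  fun i => t (i + k)

/-- The fixed enumeration of the six neighbor offsets in the hexagonal grid. -/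
def offset (d : ZMod 6) : ℤ × ℤ :=
  match d.val with
  | 0 => (0, 1)
  | 1 => (1, 1)
  | 2 => (1, 0)
  | 3 => (0, -1)
  | 4 => (-1, -1)
  | _ => (-1, 0)

/-- The neighbor of position `q` in direction `d`. -/
def addOffset (q : ℤ × ℤ) (d : ZMod 6) : ℤ × ℤ :=
  (q.1 + (offset d).1, q.2 + (offset d).2)

/-- A finite Tantrix rotation puzzle instance: a function from a finite shape
`S ⊆ ℤ × ℤ` to Tantrix tiles. -/
structure Puzzle where
  shape : Finset (ℤ × ℤ)
  tile : ℤ × ℤ → ZMod 6 → Fin 4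
  tile_isTile : ∀ q ∈ shape, IsTile (tile q)

/-- A solution of a rotation puzzle instance: a rotation for each tile such that
colors match at every joint edge of two adjacent tiles. -/
def Puzzle.Sol (A : Puzzle) (r : {q // q ∈ A.shape} → ZMod 6) : Prop :=
  ∀ (q : {q // q ∈ A.shape}) (d : ZMod 6) (h : addOffset q.val d ∈ A.shape),
    rotTile (A.tile q.val) (r q) d =
      rotTile (A.tile (addOffset q.val d)) (r ⟨addOffset q.val d, h⟩) (d + 3)

/-- `#TRP(A)`: the number of solutions of the rotation puzzle instance `A`. -/
noncomputable def Puzzle.numSolutions (A : Puzzle) : ℕ :=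
  Nat.card {r : {q // q ∈ A.shape} → ZMod 6 // A.Sol r}

/-- The color shown by the (rotated) tile at position `q` on its edge in
direction `d`, in the solution candidate `r`. -/
def edgeColor (A : Puzzle) (r : {q // q ∈ A.shape} → ZMod 6)
    (q : {q // q ∈ A.shape}) (d : ZMod 6) : Fin 4 :=
  rotTile (A.tile q.val) (r q) d

/-- Propositional formulas, built from variables by ¬, ∧, ∨. -/
inductive PropForm where
  | var : ℕ → PropForm
  | not : PropForm → PropForm
  | and : PropForm → PropForm → PropForm
  | or : PropForm → PropForm → PropForm

/-- The variables occurring in a formula. -/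
def PropForm.vars : PropForm → Finset ℕ
  | .var v => {v}
  | .not p => p.vars
  | .and p q => p.vars ∪ q.vars
  | .or p q => p.vars ∪ q.vars

/-- Evaluation of a formula under a (total) assignment. -/
def PropForm.eval (a : ℕ → Bool) : PropForm → Bool
  | .var v => a v
  | .not p => !(p.eval a)
  | .and p q => p.eval a && q.eval a
  | .or p q => p.eval a || q.eval a

/-- The size (number of symbols) of a formula. -/
def PropForm.size : PropForm → ℕ
  | .var _ => 1
  | .not p => p.size + 1
  | .and p q => p.size + q.size + 1
  | .or p q => p.size + q.size + 1

/-- A satisfying assignment of `φ` is a function from the variables of `φ`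
to `Bool` making `φ` true. -/
def PropForm.Sat (φ : PropForm) (a : {v // v ∈ φ.vars} → Bool) : Prop :=
  φ.eval (fun v => if h : v ∈ φ.vars then a ⟨v, h⟩ else false) = true

/-- `#SAT(φ)`: the number of satisfying assignments of `φ`. -/
noncomputable def PropForm.numSat (φ : PropForm) : ℕ :=
  Nat.card {a : {v // v ∈ φ.vars} → Bool // φ.Sat a}

/-- A gate instruction of a boolean circuit: `AND(j,k)`, `OR(j,k)`, or
`NOT(j)`, with 1-based gate indices `j`, `k`. -/
inductive Instr where
  | and : ℕ → ℕ → Instr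
  | or : ℕ → ℕ → Instr
  | not : ℕ → Instr
  deriving DecidableEq

/-- A boolean circuit over AND, OR, NOT with `numInputs` inputs: it is the
sequence `(α_1, …, α_m)` where `α_i = x_i` for `1 ≤ i ≤ numInputs` and the
remaining `α_i`, listed in `gates`, are gate instructions referring to earlier
gates (`j ≤ k < i`). Its size is `m = numInputs + gates.length`. -/
structure Circuit where
  numInputs : ℕ
  gates : List Instr
  wf : ∀ i (h : i < gates.length),
    match gates.get ⟨i, h⟩ with
    | .and j k => 1 ≤ j ∧ j ≤ k ∧ k ≤ numInputs + i
    | .or j k => 1 ≤ j ∧ j ≤ k ∧ k ≤ numInputs + i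
    | .not j => 1 ≤ j ∧ j ≤ numInputs + i

/-- The size `m` of a circuit. -/
def Circuit.size (C : Circuit) : ℕ := C.numInputs + C.gates.length

/-- The value computed by a gate instruction from the list `vs` of the values
of all earlier gates (`vs.getD (j-1) false` is the value of gate `j`). -/
def Instr.apply (vs : List Bool) : Instr → Bool
  | .and j k => (vs.getD (j - 1) false) && (vs.getD (k - 1) false)
  | .or j k => (vs.getD (j - 1) false) || (vs.getD (k - 1) false)
  | .not j => !(vs.getD (j - 1) false)

/-- The list of the values of all gates `α_1, …, α_m` of `C` under the input
assignment `a`, defined recursively in the standard way. -/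
def Circuit.values (C : Circuit) (a : Fin C.numInputs → Bool) : List Bool :=
  C.gates.foldl (fun vs g => vs ++ [g.apply vs]) (List.ofFn a)

/-- The value of the output gate `α_m` of `C` under the assignment `a`. -/
def Circuit.output (C : Circuit) (a : Fin C.numInputs → Bool) : Bool :=
  (C.values a).getD (C.size - 1) false

/-- `a` satisfies `C` if the output gate `α_m` evaluates to true. -/
def Circuit.Sat (C : Circuit) (a : Fin C.numInputs → Bool) : Prop :=
  C.output a = true

/-- The number of satisfying assignments of a circuit. -/
noncomputable def Circuit.numSat (C : Circuit) : ℕ :=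
  Nat.card {a : Fin C.numInputs → Bool // C.Sat a}

/-- A circuit over AND and NOT gates only (no OR gates). -/
def Circuit.NoOr (C : Circuit) : Prop :=
  ∀ g ∈ C.gates, ∀ j k, g ≠ Instr.or j k



instance (t : ZMod 6 → Fin 4) : Decidable (IsTile t) := by
  unfold IsTile; infer_instance

instance (A : Puzzle) (r : {q // q ∈ A.shape} → ZMod 6) : Decidable (A.Sol r) := by
  unfold Puzzle.Sol; infer_instance

/-- Auxiliary: first wire tile of the CROSS triangle. -/
def crossTA : ZMod 6 → Fin 4 := fun i => ![red, yellow, yellow, blue, red, blue] ⟨i.val, ZMod.val_lt i⟩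

/-- Auxiliary: helper tile of the CROSS triangle. -/
def crossTC : ZMod 6 → Fin 4 := fun i => ![red, blue, red, blue, yellow, yellow] ⟨i.val, ZMod.val_lt i⟩

/-- Auxiliary: the CROSS puzzle, a triangle of three mutually adjacent tiles. -/
def crossPuz : Puzzle where
  shape := {((0 : ℤ), (0 : ℤ)), ((1 : ℤ), (1 : ℤ)), ((1 : ℤ), (0 : ℤ))}
  tile := fun q => if q = ((1 : ℤ), (0 : ℤ)) then crossTC else crossTA
  tile_isTile := by decide

/-- Auxiliary: a rotation assignment for `crossPuz` given the three rotations. -/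
def crossR (a b c : ZMod 6) : {q // q ∈ crossPuz.shape} → ZMod 6 :=
  fun q => if q.val = ((0 : ℤ), (0 : ℤ)) then a else if q.val = ((1 : ℤ), (1 : ℤ)) then b else c

set_option maxRecDepth 100000

/-- the CROSS subpuzzle: a configuration with two boundary input
edges (left and right) and two boundary output edges (left and right) such
that for each pair of input colors (c₁, c₂) ∈ {blue, red}² the constrained
configuration has exactly one solution, and in that solution the left output
shows c₂ and the right output shows c₁. -/
theorem cross_subpuzzle :
    ∃ (A : Puzzle) (qiL qiR qoL qoR : {q // q ∈ A.shape})
      (diL diR doL doR : ZMod 6),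
      addOffset qiL.val diL ∉ A.shape ∧
      addOffset qiR.val diR ∉ A.shape ∧
      addOffset qoL.val doL ∉ A.shape ∧
      addOffset qoR.val doR ∉ A.shape ∧
      List.Pairwise (· ≠ ·)
        [(qiL.val, diL), (qiR.val, diR), (qoL.val, doL), (qoR.val, doR)] ∧
      ∀ c₁ c₂ : Fin 4, (c₁ = blue ∨ c₁ = red) → (c₂ = blue ∨ c₂ = red) →
        ∃ r : {q // q ∈ A.shape} → ZMod 6,
          (A.Sol r ∧ edgeColor A r qiL diL = c₁ ∧ edgeColor A r qiR diR = c₂) ∧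
          edgeColor A r qoL doL = c₂ ∧
          edgeColor A r qoR doR = c₁ ∧
          (∀ r', A.Sol r' ∧ edgeColor A r' qiL diL = c₁ ∧
              edgeColor A r' qiR diR = c₂ → r' = r) := by
  refine ⟨crossPuz, ⟨((0 : ℤ), (0 : ℤ)), by decide⟩, ⟨((1 : ℤ), (1 : ℤ)), by decide⟩,
    ⟨((1 : ℤ), (1 : ℤ)), by decide⟩, ⟨((0 : ℤ), (0 : ℤ)), by decide⟩,
    3, 0, 2, 5, by decide, by decide, by decide, by decide, by decide, ?_⟩
  intro c₁ c₂ h₁ h₂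
  rcases h₁ with rfl | rfl <;> rcases h₂ with rfl | rfl
  · exact ⟨crossR 0 3 0, by decide, by decide, by decide, by decide⟩
  · exact ⟨crossR 0 4 5, by decide, by decide, by decide, by decide⟩
  · exact ⟨crossR 1 3 2, by decide, by decide, by decide, by decide⟩
  · exact ⟨crossR 1 4 4, by decide, by decide, by decide, by decide⟩
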